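/- Unary Encoding with perturbation probabilities p and q satisfies ε-local differential privacy where ε = ln( p(1−q) / ((1−p)q) ), for 0 < q < p < 1. -/

import Mathlib

/-- Unary Encoding: input `v` is one-hot encoded over `Fin d`; each 1-bit is reported
as 1 with probability `p`, each 0-bit is reported as 1 with probability `q`.
`ueProb d p q v B'` is the probability of observing output vector `B'` given input `v`. -/
noncomputable def ueProb (d : ℕ) (p q : ℝ) (v : Fin d) (B' : Fin d → Bool) : ℝ :=
  ∏ i : Fin d, if i = v then (if B' i then p else 1 - p) else (if B' i then q else 1 - q)

/-- Unary Encoding with perturbation probabilities `p`, `q`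
(with `0 < q < p < 1`) satisfies ε-LDP for `ε = ln(p(1−q)/((1−p)q))`. -/
theorem unary_encoding_ldp (d : ℕ) (p q : ℝ) (hq : 0 < q) (hqp : q < p) (hp : p < 1) :
    ∀ (v₁ v₂ : Fin d) (B' : Fin d → Bool),
      ueProb d p q v₁ B' ≤
        Real.exp (Real.log (p * (1 - q) / ((1 - p) * q))) * ueProb d p q v₂ B' := by
  intro v₁ v₂ B'
  have hp0 : 0 < p := lt_trans hq hqp
  have hq1 : q < 1 := lt_trans hqp hp
  have h1p : (0:ℝ) < 1 - p := by linarith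
  have h1q : (0:ℝ) < 1 - q := by linarith
  set C := p * (1 - q) / ((1 - p) * q) with hC
  have hCpos : 0 < C := div_pos (mul_pos hp0 h1q) (mul_pos h1p hq)
  rw [Real.exp_log hCpos]
  have hC1 : 1 ≤ C := by
    rw [le_div_iff₀ (mul_pos h1p hq)]
    nlinarith
  have hfac : ∀ (x : ℝ) (i : Fin d), x ∈ ({p, q} : Set ℝ) →
      0 ≤ (if B' i then x else 1 - x) := by
    intro x i hx
    rcases hx with h | h <;> subst h <;> split <;> linarith
  have hnonneg : ∀ w : Fin d, 0 ≤ ueProb d p q w B' := by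
    intro w
    apply Finset.prod_nonneg
    intro i _
    split
    · exact hfac p i (Or.inl rfl)
    · exact hfac q i (Or.inr rfl)
  by_cases hv : v₁ = v₂
  · subst hv
    exact le_mul_of_one_le_left (hnonneg v₁) hC1
  · have key : ∀ w₁ w₂ : Fin d, w₁ ≠ w₂ → ueProb d p q w₁ B' =
        ((∏ i ∈ Finset.univ \ {w₁, w₂}, (if B' i then q else 1 - q)) *
          ((if B' w₁ then p else 1 - p) * (if B' w₂ then q else 1 - q))) := by
      intro w₁ w₂ h
      unfold ueProb
      rw [← Finset.prod_sdiff (Finset.subset_univ ({w₁, w₂} : Finset (Fin d)))]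
      congr 1
      · apply Finset.prod_congr rfl
        intro i hi
        simp only [Finset.mem_sdiff, Finset.mem_univ, Finset.mem_insert,
          Finset.mem_singleton, true_and, not_or] at hi
        rw [if_neg hi.1]
      · rw [Finset.prod_pair h, if_pos rfl, if_neg (Ne.symm h)]
    rw [key v₁ v₂ hv, key v₂ v₁ (Ne.symm hv)]
    have hset : ({v₂, v₁} : Finset (Fin d)) = {v₁, v₂} := by
      ext x; simp [or_comm]
    rw [hset]
    set R := ∏ i ∈ Finset.univ \ ({v₁, v₂} : Finset (Fin d)),
        (if B' i then q else 1 - q) with hR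
    have hRpos : 0 ≤ R := by
      apply Finset.prod_nonneg
      intro i _
      exact hfac q i (Or.inr rfl)
    rw [show C * (R * ((if B' v₂ then p else 1 - p) * (if B' v₁ then q else 1 - q)))
        = R * (C * ((if B' v₂ then p else 1 - p) * (if B' v₁ then q else 1 - q))) by ring]
    apply mul_le_mul_of_nonneg_left _ hRpos
    have hCq : C * ((1 - p) * q) = p * (1 - q) := by
      rw [hC]; exact div_mul_cancel₀ _ (mul_pos h1p hq).ne'
    cases hb1 : B' v₁ <;> cases hb2 : B' v₂ <;> norm_num <;>
      nlinarith [hC1, hCq, mul_pos hp0 h1q, mul_pos h1p hq]
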